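/- (Convergence of the complex-valued split-sign Hopfield network with Hermitian weights.) Let S = {1+i, 1−i, −1−i, −1+i}, let D = { z ∈ ℂ : Re z ≠ 0 and Im z ≠ 0 }, and for z ∈ D define sgn(z) = sign(Re z) + sign(Im z)·i. Let N ≥ 1 and let (w_ij) be an N×N complex matrix with w_ij = conj(w_ji) for all i, j, and with each diagonal entry w_ii a nonnegative real number. Then for every update schedule σ : ℕ → {1,…,N} and every initial state x(0) ∈ S^N, the asynchronous trajectory defined by x_i(t+1) = sgn(v_i(t)) if i = σ(t) and v_i(t) ∈ D, and x_i(t+1) = x_i(t) otherwise, where v_i(t) = Σⱼ w_ij · x_j(t), is eventually constant: there exists T such that x(t) = x(T) for all t ≥ T. -/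

import Mathlib

/-!
The energy `E y = -Re (y* W y)` is a Lyapunov function. For Hermitian `W`, replacing `yᵢ = a` by
`s` changes it by `-2 Re (conj (s - a) vᵢ) - wᵢᵢ |s - a|²`, where `v = W y`. Componentwise,
`sign v * v = |v| ≥ a * v` whenever `|a| ≤ 1`, with equality only for `a = sign v`, so every
update that changes the state strictly lowers `E`. The states stay in the finite set `S^N`, so
from a time at which `E` is minimal along the trajectory nothing can change any more.
-/

open Matrix Complex Function

theorem Real.sign_sub_mul_self_nonneg {a : ℝ} (ha : |a| ≤ 1) (v : ℝ) :
    0 ≤ (Real.sign v - a) * v := by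
  obtain ⟨ha₁, ha₂⟩ := abs_le.mp ha
  rcases lt_trichotomy v 0 with hv | rfl | hv
  · rw [Real.sign_of_neg hv]; nlinarith
  · simp
  · rw [Real.sign_of_pos hv]; nlinarith

theorem Real.sign_sub_mul_self_pos {a v : ℝ} (ha : |a| ≤ 1) (hv : v ≠ 0)
    (hne : Real.sign v ≠ a) : 0 < (Real.sign v - a) * v := by
  obtain ⟨ha₁, ha₂⟩ := abs_le.mp ha
  rcases hv.lt_or_gt with hv | hv
  · rw [Real.sign_of_neg hv] at hne ⊢
    exact mul_pos_of_neg_of_neg (by grind) hv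
  · rw [Real.sign_of_pos hv] at hne ⊢
    exact mul_pos (by grind) hv

namespace Complex

noncomputable def splitSign (z : ℂ) : ℂ := (Real.sign z.re : ℂ) + (Real.sign z.im : ℂ) * I

def splitSignDomain : Set ℂ := {z | z.re ≠ 0 ∧ z.im ≠ 0}

def splitSignStates : Set ℂ := {1 + I, 1 - I, -1 - I, -1 + I}

@[simp] theorem splitSign_re (z : ℂ) : (splitSign z).re = Real.sign z.re := by simp [splitSign]

@[simp] theorem splitSign_im (z : ℂ) : (splitSign z).im = Real.sign z.im := by simp [splitSign]

theorem splitSignStates_finite : splitSignStates.Finite := by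
  unfold splitSignStates; exact Set.toFinite _

theorem abs_re_le_one_of_mem_splitSignStates {a : ℂ} (ha : a ∈ splitSignStates) :
    |a.re| ≤ 1 ∧ |a.im| ≤ 1 := by
  rcases ha with rfl | rfl | rfl | rfl <;> simp

theorem splitSign_mem_splitSignStates {z : ℂ} (hz : z ∈ splitSignDomain) :
    splitSign z ∈ splitSignStates := by
  have hsign : ∀ r : ℝ, r ≠ 0 → Real.sign r = 1 ∨ Real.sign r = -1 := fun r hr =>
    hr.lt_or_gt.imp Real.sign_of_neg Real.sign_of_pos |>.symm
  rcases hsign _ hz.1 with hre | hre <;> rcases hsign _ hz.2 with him | him <;>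
    simp [splitSign, splitSignStates, hre, him, sub_eq_add_neg]

theorem re_star_splitSign_sub_mul_pos {a v : ℂ} (ha : |a.re| ≤ 1 ∧ |a.im| ≤ 1)
    (hv : v ∈ splitSignDomain) (hne : splitSign v ≠ a) :
    0 < (star (splitSign v - a) * v).re := by
  have hre := Real.sign_sub_mul_self_nonneg ha.1 v.re
  have him := Real.sign_sub_mul_self_nonneg ha.2 v.im
  have hne' : Real.sign v.re ≠ a.re ∨ Real.sign v.im ≠ a.im := by
    by_contra! h
    exact hne (Complex.ext (by simpa using h.1) (by simpa using h.2))
  simp only [mul_re, star_def, conj_re, conj_im, sub_re, sub_im, splitSign_re, splitSign_im]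
  rcases hne' with h | h
  · nlinarith [Real.sign_sub_mul_self_pos ha.1 hv.1 h]
  · nlinarith [Real.sign_sub_mul_self_pos ha.2 hv.2 h]

end Complex

theorem Function.update_eq_add_single {ι R : Type*} [DecidableEq ι] [AddCommGroup R]
    (a : ι → R) (i : ι) (s : R) : update a i s = a + Pi.single i (s - a i) := by
  ext j
  by_cases h : j = i
  · subst h; simp
  · simp [h]

theorem exists_forall_ge_eq_of_finite_range_of_descent {α β : Type*} [LinearOrder β]
    {x : ℕ → α} (hfin : (Set.range x).Finite) (E : α → β)
    (hE : ∀ t, x (t + 1) = x t ∨ E (x (t + 1)) < E (x t)) :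
    ∃ T, ∀ t, T ≤ t → x t = x T := by
  obtain ⟨_, ⟨T, rfl⟩, hmin⟩ := Set.exists_min_image (Set.range x) E hfin (Set.range_nonempty x)
  refine ⟨T, fun t ht => ?_⟩
  induction t, ht using Nat.le_induction with
  | base => rfl
  | succ t _ ih =>
    refine ((hE t).resolve_right fun hlt => ?_).trans ih
    exact (hmin _ ⟨t + 1, rfl⟩).not_gt (ih ▸ hlt)

section Energy

variable {n : Type*} [Fintype n] [DecidableEq n]

theorem Matrix.star_update_dotProduct_mulVec_update {R : Type*} [CommRing R] [StarRing R]
    (W : Matrix n n R) (a : n → R) (i : n) (s : R) :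
    star (update a i s) ⬝ᵥ W *ᵥ update a i s =
      star a ⬝ᵥ W *ᵥ a + star (s - a i) * (W *ᵥ a) i + (star a ᵥ* W) i * (s - a i) +
        star (s - a i) * W i i * (s - a i) := by
  have hdiag : (W *ᵥ Pi.single i (s - a i)) i = W i i * (s - a i) := by
    simp only [mulVec, dotProduct_single]
  rw [update_eq_add_single, star_add, ← Pi.single_star, mulVec_add, dotProduct_add,
    add_dotProduct, add_dotProduct, single_dotProduct, single_dotProduct,
    dotProduct_mulVec (star a) W (Pi.single i (s - a i)), dotProduct_single, hdiag]
  ring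

noncomputable def hopfieldEnergy (W : Matrix n n ℂ) (y : n → ℂ) : ℝ := -(star y ⬝ᵥ W *ᵥ y).re

theorem hopfieldEnergy_update {W : Matrix n n ℂ} (hW : W.IsHermitian) (a : n → ℂ) (i : n)
    (s : ℂ) :
    hopfieldEnergy W (update a i s) = hopfieldEnergy W a -
      2 * (star (s - a i) * (W *ᵥ a) i).re - (W i i).re * normSq (s - a i) := by
  have hcol : (star a ᵥ* W) i = star ((W *ᵥ a) i) := by
    conv_lhs => rw [← hW.eq]
    rw [← star_mulVec]; rfl
  have hcross : (star ((W *ᵥ a) i) * (s - a i)).re = (star (s - a i) * (W *ᵥ a) i).re := by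
    simp only [mul_re, star_def, conj_re, conj_im]; ring
  have hdiag : (star (s - a i) * W i i * (s - a i)).re = (W i i).re * normSq (s - a i) := by
    rw [mul_right_comm, star_def, ← normSq_eq_conj_mul_self, re_ofReal_mul, mul_comm]
  simp only [hopfieldEnergy, star_update_dotProduct_mulVec_update, hcol, add_re, hcross, hdiag]
  ring

theorem hopfieldEnergy_update_lt {W : Matrix n n ℂ} (hW : W.IsHermitian) {i : n}
    (hWii : 0 ≤ (W i i).re) {a : n → ℂ} {s : ℂ} (h : 0 < (star (s - a i) * (W *ᵥ a) i).re) :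
    hopfieldEnergy W (update a i s) < hopfieldEnergy W a := by
  rw [hopfieldEnergy_update hW]
  nlinarith [mul_nonneg hWii (normSq_nonneg (s - a i))]

open Classical in
noncomputable def splitSignUpdate (W : Matrix n n ℂ) (i : n) (y : n → ℂ) : n → ℂ :=
  if (W *ᵥ y) i ∈ splitSignDomain then update y i (splitSign ((W *ᵥ y) i)) else y

theorem splitSignUpdate_mem_pi {W : Matrix n n ℂ} {i : n} {y : n → ℂ}
    (hy : y ∈ Set.univ.pi fun _ => splitSignStates) :
    splitSignUpdate W i y ∈ Set.univ.pi fun _ => splitSignStates := by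
  unfold splitSignUpdate
  split_ifs with hv
  · exact (Set.update_mem_pi_iff_of_mem hy).2 fun _ => splitSign_mem_splitSignStates hv
  · exact hy

theorem hopfieldEnergy_splitSignUpdate_lt {W : Matrix n n ℂ} (hW : W.IsHermitian) {i : n}
    (hWii : 0 ≤ (W i i).re) {y : n → ℂ} (hy : y ∈ Set.univ.pi fun _ => splitSignStates)
    (hne : splitSignUpdate W i y ≠ y) :
    hopfieldEnergy W (splitSignUpdate W i y) < hopfieldEnergy W y := by
  unfold splitSignUpdate at hne ⊢
  split_ifs at hne ⊢ with hv
  · refine hopfieldEnergy_update_lt hW hWii (re_star_splitSign_sub_mul_pos ?_ hv ?_)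
    · exact abs_re_le_one_of_mem_splitSignStates (hy i trivial)
    · rintro h; exact hne (by rw [h, update_eq_self])
  · exact absurd rfl hne

end Energy

theorem complex_split_sign_hopfield_convergence_general
    (N : ℕ)
    (w : Fin N → Fin N → ℂ)
    (hsym : ∀ i j, w i j = (starRingEnd ℂ) (w j i))
    (hdiag : ∀ i, ∃ r : ℝ, 0 ≤ r ∧ w i i = (r : ℂ))
    (σ : ℕ → Fin N) (x : ℕ → Fin N → ℂ)
    (hx0 : ∀ i, x 0 i ∈
      ({1 + Complex.I, 1 - Complex.I, -1 - Complex.I, -1 + Complex.I} : Set ℂ))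
    (hdyn : ∀ t i,
      ((i = σ t ∧ (∑ j, w i j * x t j).re ≠ 0 ∧ (∑ j, w i j * x t j).im ≠ 0) →
        x (t + 1) i = (Real.sign (∑ j, w i j * x t j).re : ℂ) +
          (Real.sign (∑ j, w i j * x t j).im : ℂ) * Complex.I) ∧
      (¬(i = σ t ∧ (∑ j, w i j * x t j).re ≠ 0 ∧ (∑ j, w i j * x t j).im ≠ 0) →
        x (t + 1) i = x t i)) :
    ∃ T, ∀ t, T ≤ t → x t = x T := by
  have hW : IsHermitian (w : Matrix (Fin N) (Fin N) ℂ) :=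
    Matrix.ext fun i j => (hsym i j).symm
  have hWii : ∀ i, 0 ≤ (w i i).re := fun i => by
    obtain ⟨r, hr, hwr⟩ := hdiag i
    rwa [hwr, ofReal_re]
  have hstep : ∀ t, x (t + 1) = splitSignUpdate w (σ t) (x t) := fun t => by
    ext j
    unfold splitSignUpdate
    by_cases hfire : j = σ t ∧ (w *ᵥ x t) j ∈ splitSignDomain
    · obtain ⟨rfl, hv⟩ := hfire
      rw [(hdyn t (σ t)).1 ⟨rfl, hv⟩, if_pos hv, update_self]
      rfl
    · rw [(hdyn t j).2 fun h => hfire ⟨h.1, h.2⟩]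
      split_ifs with hv
      · rw [update_of_ne fun h => hfire ⟨h, h ▸ hv⟩]
      · rfl
  have hmem : ∀ t, x t ∈ Set.univ.pi fun _ => splitSignStates := fun t => by
    induction t with
    | zero => exact fun i _ => hx0 i
    | succ t ih => exact hstep t ▸ splitSignUpdate_mem_pi ih
  refine exists_forall_ge_eq_of_finite_range_of_descent
    ((Set.Finite.pi fun _ => splitSignStates_finite).subset (Set.range_subset_iff.2 hmem))
    (hopfieldEnergy w) fun t => ?_
  rw [hstep t]
  exact (eq_or_ne _ _).imp_right (hopfieldEnergy_splitSignUpdate_lt hW (hWii _) (hmem t))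

theorem complex_split_sign_hopfield_convergence
    (N : ℕ) (hN : 1 ≤ N)
    (w : Fin N → Fin N → ℂ)
    (hsym : ∀ i j, w i j = (starRingEnd ℂ) (w j i))
    (hdiag : ∀ i, ∃ r : ℝ, 0 ≤ r ∧ w i i = (r : ℂ))
    (σ : ℕ → Fin N) (x : ℕ → Fin N → ℂ)
    (hx0 : ∀ i, x 0 i ∈
      ({1 + Complex.I, 1 - Complex.I, -1 - Complex.I, -1 + Complex.I} : Set ℂ))
    (hdyn : ∀ t i,
      ((i = σ t ∧ (∑ j, w i j * x t j).re ≠ 0 ∧ (∑ j, w i j * x t j).im ≠ 0) →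
        x (t + 1) i = (Real.sign (∑ j, w i j * x t j).re : ℂ) +
          (Real.sign (∑ j, w i j * x t j).im : ℂ) * Complex.I) ∧
      (¬(i = σ t ∧ (∑ j, w i j * x t j).re ≠ 0 ∧ (∑ j, w i j * x t j).im ≠ 0) →
        x (t + 1) i = x t i)) :
    ∃ T, ∀ t, T ≤ t → x t = x T :=
  complex_split_sign_hopfield_convergence_general N w hsym hdiag σ x hx0 hdyn
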